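/- arXiv:0912.0702 — 5 statements merged into one kernel-verified Lean document; each statement's English description precedes it below -/
import Mathlib

section
/- Let $A(B_n)$ be the 0/1 matrix whose rows are indexed by pairs $(F,\mathbf{k})$ where $F = [n-2]\setminus\{j\}$ ranges over the facets of the simplicial complex $B_n = \{S \subsetneq [n-2]\}$ and $\mathbf{k} \in \{0,1\}^{|F|}$, whose columns are indexed by $\mathbf{i} \in \{0,1\}^{n-2}$, and whose $((F,\mathbf{k}),\mathbf{i})$ entry is $1$ if $\mathbf{i}|_F = \mathbf{k}$ and $0$ otherwise. Then the kernel of $A(B_n)$ over the rationals is one-dimensional. -/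
/-- The margin matrix `A(B_n)` of the model `B_n = {S ⊊ [n-2]}` on binary variables:
rows are indexed by pairs `(j, k)` where the facet is `F = [n-2] \ {j}` and
`k ∈ {0,1}^F`; columns are indexed by `i ∈ {0,1}^{n-2}`; the entry is `1` iff
`i` restricted to `F` equals `k`. -/
def marginMatrix (n : ℕ) (R : Type*) [Zero R] [One R] :
    Matrix (Σ j : Fin (n-2), ({x : Fin (n-2) // x ≠ j} → Fin 2)) ((Fin (n-2)) → Fin 2) R :=
  fun r i => if (∀ x : {x : Fin (n-2) // x ≠ r.1}, i x.1 = r.2 x) then 1 else 0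

/-- The parity vector spanning the kernel. -/
noncomputable def parityVec (m : ℕ) : (Fin m → Fin 2) → ℚ :=
  fun i => (-1 : ℚ) ^ (∑ x, (i x).val)

lemma sum_update_val {m : ℕ} (i : Fin m → Fin 2) (j : Fin m) (b : Fin 2) :
    ∑ x, ((Function.update i j b) x).val = b.val + ∑ x ∈ Finset.univ.erase j, (i x).val := by
  calc ∑ x, ((Function.update i j b) x).val
      = ∑ x, Function.update (fun x => (i x).val) j b.val x := by
        refine Finset.sum_congr rfl fun x _ => ?_
        rcases eq_or_ne x j with h | h
        · subst h; simp
        · simp [Function.update_of_ne h]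
    _ = b.val + ∑ x ∈ Finset.univ.erase j, (i x).val := by
        rw [Finset.sum_update_of_mem (Finset.mem_univ j), Finset.erase_eq]

lemma row_eq (n : ℕ) (v : (Fin (n-2) → Fin 2) → ℚ) (i : Fin (n-2) → Fin 2) (j : Fin (n-2)) :
    (marginMatrix n ℚ).mulVec v ⟨j, fun x => i x.1⟩
      = v (Function.update i j 0) + v (Function.update i j 1) := by
  classical
  have hne : Function.update i j (0 : Fin 2) ≠ Function.update i j 1 := by
    intro h
    have := congrFun h j
    simp at this
  have hfilter : (Finset.univ : Finset (Fin (n-2) → Fin 2)).filter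
      (fun i' => ∀ x : {x : Fin (n-2) // x ≠ j}, i' x.1 = i x.1)
      = {Function.update i j 0, Function.update i j 1} := by
    ext i'
    simp only [Finset.mem_filter, Finset.mem_univ, true_and, Finset.mem_insert,
      Finset.mem_singleton]
    constructor
    · intro h
      have hrep : i' = Function.update i j (i' j) := by
        funext x
        rcases eq_or_ne x j with hx | hx
        · subst hx; simp
        · simp [Function.update_of_ne hx, h ⟨x, hx⟩]
      have h2 : i' j = 0 ∨ i' j = 1 := by omega
      rcases h2 with h2 | h2
      · left; rw [hrep, h2]
      · right; rw [hrep, h2]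
    · rintro (rfl | rfl) <;> (intro x; simp [Function.update_of_ne x.2])
  simp only [Matrix.mulVec, dotProduct, marginMatrix, ite_mul, one_mul, zero_mul]
  rw [← Finset.sum_filter, hfilter, Finset.sum_pair hne]

lemma parityVec_update (n : ℕ) (i : Fin (n-2) → Fin 2) (j : Fin (n-2)) :
    parityVec (n-2) (Function.update i j 0) + parityVec (n-2) (Function.update i j 1) = 0 := by
  unfold parityVec
  rw [sum_update_val, sum_update_val]
  simp [pow_succ, pow_add]

/-- The kernel of `A(B_n)` over the rationals is one-dimensional. -/
theorem kernel_marginMatrix_one_dimensional (n : ℕ) (hn : 3 ≤ n) :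
    Module.finrank ℚ (LinearMap.ker (marginMatrix n ℚ).mulVecLin) = 1 := by
  classical
  set w : (Fin (n-2) → Fin 2) → ℚ := parityVec (n-2) with hw
  have hw0 : w (fun _ => 0) = 1 := by simp [hw, parityVec]
  have hwne : w ≠ 0 := by
    intro h
    have := congrFun h (fun _ => 0)
    rw [hw0] at this
    simp at this
  have hker : LinearMap.ker (marginMatrix n ℚ).mulVecLin = Submodule.span ℚ {w} := by
    apply le_antisymm
    · intro v hv
      rw [LinearMap.mem_ker] at hv
      have hv' : (marginMatrix n ℚ).mulVec v = 0 := hv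
      have hrow : ∀ (i : Fin (n-2) → Fin 2) (j : Fin (n-2)),
          v (Function.update i j 0) + v (Function.update i j 1) = 0 := by
        intro i j
        rw [← row_eq, hv']
        rfl
      have key : ∀ N (i : Fin (n-2) → Fin 2), (∑ x, (i x).val) ≤ N →
          v i = v (fun _ => 0) * w i := by
        intro N
        induction N with
        | zero =>
          intro i hi
          have hz : i = fun _ => 0 := by
            funext x
            have hx : (i x).val = 0 := by
              have h2 : (i x).val ≤ ∑ y, (i y).val :=
                Finset.single_le_sum (f := fun y => (i y).val)
                  (fun y _ => Nat.zero_le _) (Finset.mem_univ x)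
              omega
            omega
          rw [hz, hw0, mul_one]
        | succ N ih =>
          intro i hi
          by_cases h0 : ∑ x, (i x).val = 0
          · exact ih i (by omega)
          · have : ∃ j, (i j).val ≠ 0 := by
              by_contra hc
              push_neg at hc
              exact h0 (Finset.sum_eq_zero fun x _ => hc x)
            obtain ⟨j, hj⟩ := this
            have hj1 : i j = 1 := by omega
            have hupd : Function.update i j 1 = i := by
              rw [← hj1]; exact Function.update_eq_self j i
            have hsum0 : ∑ x, ((Function.update i j 0) x).val
                = ∑ x ∈ Finset.univ.erase j, (i x).val := by
              rw [sum_update_val]; simp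
            have hsumi : ∑ x, (i x).val = 1 + ∑ x ∈ Finset.univ.erase j, (i x).val := by
              rw [← Finset.add_sum_erase _ _ (Finset.mem_univ j), hj1]; simp
            have hle : ∑ x, ((Function.update i j 0) x).val ≤ N := by omega
            have h1 := hrow i j
            rw [hupd] at h1
            have h2 := ih _ hle
            have hwrel : w (Function.update i j 0) + w i = 0 := by
              have := parityVec_update n i j
              rwa [hupd] at this
            have : v i = - v (Function.update i j 0) := by linarith
            rw [this, h2]
            have : w i = - w (Function.update i j 0) := by linarith
            rw [this]
            ring
      rw [Submodule.mem_span_singleton]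
      refine ⟨v (fun _ => 0), ?_⟩
      funext i
      simp only [Pi.smul_apply, smul_eq_mul]
      rw [key (∑ x, (i x).val) i le_rfl]
    · rw [Submodule.span_le, Set.singleton_subset_iff]
      rw [SetLike.mem_coe, LinearMap.mem_ker]
      show (marginMatrix n ℚ).mulVec w = 0
      funext r
      obtain ⟨j, k⟩ := r
      set i : Fin (n-2) → Fin 2 := fun x => if h : x = j then 0 else k ⟨x, h⟩ with hi
      have hk : k = fun x : {x : Fin (n-2) // x ≠ j} => i x.1 := by
        funext x
        simp [hi, x.2]
      have hrw : (⟨j, k⟩ : Σ j : Fin (n-2), ({x : Fin (n-2) // x ≠ j} → Fin 2))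
          = ⟨j, fun x => i x.1⟩ := by rw [hk]
      rw [hrw]
      show (marginMatrix n ℚ).mulVec w ⟨j, fun x => i x.1⟩ = 0
      rw [row_eq]
      exact parityVec_update n i j
  rw [hker]
  exact finrank_span_singleton hwne
end

section
/- With $A(B_n)$ as above, every vector in the kernel of $A(B_n)$ over the rationals is a scalar multiple of the checkerboard vector $\mathbf{w}$ with $w_{\mathbf{i}} = (-1)^{\mathbf{1}\cdot\mathbf{i}}$. In particular, every nonzero kernel vector has full support. -/
def checker (n : ℕ) : ((Fin (n-2)) → Fin 2) → ℚ :=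
  fun i => (-1 : ℚ) ^ (∑ x, (i x : ℕ))

/-- Every rational kernel vector of `A(B_n)` is a scalar multiple of the checkerboard
vector; in particular every nonzero kernel vector has full support. -/
theorem kernel_marginMatrix_eq_span_checker (n : ℕ) (hn : 3 ≤ n) :
    (∀ v : ((Fin (n-2)) → Fin 2) → ℚ, (marginMatrix n ℚ).mulVec v = 0 →
      ∃ c : ℚ, v = c • checker n) ∧
    (∀ v : ((Fin (n-2)) → Fin 2) → ℚ, (marginMatrix n ℚ).mulVec v = 0 → v ≠ 0 →
      ∀ i, v i ≠ 0) := by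
  have fin2 : ∀ b : Fin 2, b = 0 ∨ b = 1 := by decide
  have key : ∀ v : ((Fin (n-2)) → Fin 2) → ℚ, (marginMatrix n ℚ).mulVec v = 0 →
      ∃ c : ℚ, v = c • checker n := by
    intro v hv
    -- flip lemma: flipping one coordinate negates v
    have flip : ∀ (i : Fin (n-2) → Fin 2) (j : Fin (n-2)),
        v (Function.update i j 0) + v (Function.update i j 1) = 0 := by
      intro i j
      have h0 := congrFun hv ⟨j, fun x => i x.1⟩
      simp only [Matrix.mulVec, dotProduct, Pi.zero_apply] at h0
      have hne : Function.update i j 0 ≠ Function.update i j 1 := by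
        intro h
        have := congrFun h j
        simp [Function.update_self] at this
      have hmem : ∀ i' : Fin (n-2) → Fin 2,
          marginMatrix n ℚ ⟨j, fun x => i x.1⟩ i' * v i'
          = if i' ∈ ({Function.update i j 0, Function.update i j 1} : Finset _)
            then v i' else 0 := by
        intro i'
        unfold marginMatrix
        by_cases h : ∀ x : {x : Fin (n-2) // x ≠ j}, i' x.1 = i x.1
        · have heq : i' = Function.update i j (i' j) := by
            funext x
            rcases eq_or_ne x j with rfl | hx
            · simp
            · rw [Function.update_of_ne hx]; exact h ⟨x, hx⟩
          have hin : i' ∈ ({Function.update i j 0, Function.update i j 1} : Finset _) := by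
            rcases fin2 (i' j) with hb | hb
            · rw [heq, hb]; exact Finset.mem_insert_self _ _
            · rw [heq, hb]
              exact Finset.mem_insert_of_mem (Finset.mem_singleton_self _)
          simp [h, hin]
        · have hno : i' ∉ ({Function.update i j 0, Function.update i j 1} : Finset _) := by
            simp only [Finset.mem_insert, Finset.mem_singleton]
            rintro (rfl | rfl) <;>
              exact h (fun x => Function.update_of_ne x.2 _ _)
          rw [if_neg h, if_neg hno, zero_mul]
      rw [Finset.sum_congr rfl (fun i' _ => hmem i'), Finset.sum_ite_mem,
        Finset.univ_inter, Finset.sum_pair hne] at h0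
      exact h0
    have zero_lemma : checker n (fun _ => 0) = 1 := by simp [checker]
    have main : ∀ N (i : Fin (n-2) → Fin 2), (∑ x, (i x : ℕ)) = N →
        v i = v (fun _ => 0) * checker n i := by
      intro N
      induction N using Nat.strong_induction_on with
      | _ N ih =>
        intro i hi
        by_cases h : ∀ x, i x = 0
        · have hi0 : i = fun _ => 0 := funext h
          rw [hi0, zero_lemma, mul_one]
        · push_neg at h
          obtain ⟨j, hj⟩ := h
          have hj1 : i j = 1 := by
            rcases fin2 (i j) with hb | hb
            · exact absurd hb hj
            · exact hb
          set i0 := Function.update i j 0 with hi0def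
          have hupd : Function.update i j 1 = i := by
            rw [← hj1]; exact Function.update_eq_self j i
          have hvflip : v i = - v i0 := by
            have := flip i j
            rw [hupd] at this; linarith
          have hrest : (∑ x, (i0 x : ℕ)) = ∑ x ∈ Finset.univ \ {j}, (i x : ℕ) := by
            have e0 : ∀ x, ((i0 x : ℕ)) = Function.update (fun x => (i x : ℕ)) j 0 x := by
              intro x
              rcases eq_or_ne x j with rfl | hx
              · simp [hi0def]
              · rw [hi0def, Function.update_of_ne hx, Function.update_of_ne hx]
            rw [Finset.sum_congr rfl (fun x _ => e0 x),
              Finset.sum_update_of_mem (Finset.mem_univ j), zero_add]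
          have hN : N = (∑ x ∈ Finset.univ \ {j}, (i x : ℕ)) + 1 := by
            rw [← hi, Finset.sum_eq_add_sum_sdiff_singleton_of_mem (Finset.mem_univ j)
              (fun x => (i x : ℕ)), hj1]
            simp [add_comm]
          have hlt : (∑ x, (i0 x : ℕ)) < N := by
            rw [hrest]; omega
          have hrec := ih _ hlt i0 rfl
          have hcheck : checker n i = - checker n i0 := by
            unfold checker
            rw [hi, hrest, hN, pow_succ]
            ring
          rw [hvflip, hrec, hcheck]
          ring
    exact ⟨v (fun _ => 0), funext fun i => by
      rw [main _ i rfl, Pi.smul_apply, smul_eq_mul]⟩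
  refine ⟨key, ?_⟩
  intro v hv hv0 i
  obtain ⟨c, rfl⟩ := key v hv
  have hc : c ≠ 0 := by rintro rfl; simp at hv0
  have hch : checker n i ≠ 0 := pow_ne_zero _ (by norm_num)
  simp only [Pi.smul_apply, smul_eq_mul]
  exact mul_ne_zero hc hch
end

section
/- For $n \geq 4$, let $\Gamma^n_\sigma$ be the integer matrix $\begin{pmatrix} \mathbf{e}_{\mathbf{0}} & \mathbf{e}_{\mathbf{0}} & A(B_n)_{\bar{\mathbf{0}}} \\ 1 & 0 & \mathbf{r} \\ 0 & 1 & \mathbf{1}-\mathbf{r} \end{pmatrix}$, where $A(B_n)_{\bar{\mathbf{0}}}$ is the margin matrix $A(B_n)$ with the column indexed by $\mathbf{0}$ removed (columns ordered first by the indices $\mathbf{i}$ with $\mathbf{1}\cdot\mathbf{i}$ odd and then those with $\mathbf{1}\cdot\mathbf{i}$ even and $\mathbf{i} \neq \mathbf{0}$), $\mathbf{e}_{\mathbf{0}}$ is the column of $A(B_n)$ indexed by $\mathbf{0}$, and $\mathbf{r}$ is the row vector equal to $1$ on the $2^{n-3}$ odd-parity columns and $0$ on the $2^{n-3}-1$ even-parity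 columns. Then the kernel of $\Gamma^n_\sigma$ is one-dimensional, spanned by the vector with first coordinate $2^{n-3}$, second coordinate $-(2^{n-3}-1)$, coordinate $-1$ on each odd-parity column, and coordinate $+1$ on each even-parity column. -/
/-- The matrix `Γ^n_σ`: the two columns `e₀` of `A(B_n)` augmented by the rows
`(1, 0, r)` and `(0, 1, 1-r)`, together with the columns of `A(B_n)` other than the
one indexed by `0`, where `r` is the indicator of the odd-parity columns. -/
def gammaSigma (n : ℕ) :
    Matrix ((Σ j : Fin (n-2), ({x : Fin (n-2) // x ≠ j} → Fin 2)) ⊕ Fin 2)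
      (Fin 2 ⊕ {i : (Fin (n-2)) → Fin 2 // i ≠ 0}) ℚ :=
  fun r c =>
    match r, c with
    | Sum.inl r, Sum.inl _ => marginMatrix n ℚ r 0
    | Sum.inl r, Sum.inr i => marginMatrix n ℚ r i.1
    | Sum.inr l, Sum.inl l' => if l = l' then 1 else 0
    | Sum.inr l, Sum.inr i =>
        if (∑ x, (i.1 x : ℕ)) % 2 = 1 then (if l = 0 then 1 else 0)
        else (if l = 1 then 1 else 0)

/-- The spanning vector of the kernel of `Γ^n_σ`: first coordinate `2^{n-3}`,
second coordinate `-(2^{n-3}-1)`, `-1` on odd-parity columns, `+1` on even-parity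
columns. -/
def fSigma (n : ℕ) : (Fin 2 ⊕ {i : (Fin (n-2)) → Fin 2 // i ≠ 0}) → ℚ :=
  fun c =>
    match c with
    | Sum.inl l => if l = 0 then 2^(n-3) else -(2^(n-3) - 1)
    | Sum.inr i => if (∑ x, (i.1 x : ℕ)) % 2 = 1 then -1 else 1

namespace GSAux

variable {n : ℕ}

def extv (v : (Fin 2 ⊕ {i : (Fin (n-2)) → Fin 2 // i ≠ 0}) → ℚ)
    (i : Fin (n-2) → Fin 2) : ℚ :=
  if h : i = 0 then v (Sum.inl 0) + v (Sum.inl 1) else v (Sum.inr ⟨i, h⟩)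

def Ecol (j : Fin (n-2)) (s : {x : Fin (n-2) // x ≠ j} → Fin 2) (a : Fin 2) :
    Fin (n-2) → Fin 2 :=
  fun x => if h : x = j then a else s ⟨x, h⟩

lemma Ecol_self (j : Fin (n-2)) (s : {x : Fin (n-2) // x ≠ j} → Fin 2) (a : Fin 2) :
    Ecol j s a j = a := dif_pos rfl

lemma Ecol_ne' (j : Fin (n-2)) (s : {x : Fin (n-2) // x ≠ j} → Fin 2) (a : Fin 2)
    (x : Fin (n-2)) (hx : x ≠ j) : Ecol j s a x = s ⟨x, hx⟩ := dif_neg hx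

lemma Ecol_zero_ne_one (j : Fin (n-2)) (s : {x : Fin (n-2) // x ≠ j} → Fin 2) :
    Ecol j s 0 ≠ Ecol j s 1 := by
  intro h
  have := congrFun h j
  rw [Ecol_self, Ecol_self] at this
  exact absurd this (by decide)

lemma pred_iff (j : Fin (n-2)) (s : {x : Fin (n-2) // x ≠ j} → Fin 2)
    (i : Fin (n-2) → Fin 2) :
    (∀ x : {x : Fin (n-2) // x ≠ j}, i x.1 = s x) ↔ (i = Ecol j s 0 ∨ i = Ecol j s 1) := by
  constructor
  · intro h
    have key : ∀ a, i j = a → i = Ecol j s a := by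
      intro a ha; funext x
      by_cases hx : x = j
      · subst hx; rw [Ecol_self]; exact ha
      · rw [Ecol_ne' j s a x hx]; exact h ⟨x, hx⟩
    have h2 : ∀ a : Fin 2, a = 0 ∨ a = 1 := by decide
    rcases h2 (i j) with h0 | h1
    · exact Or.inl (key 0 h0)
    · exact Or.inr (key 1 h1)
  · rintro (rfl | rfl) x <;> exact Ecol_ne' j _ _ x.1 x.2

lemma sum_indicator_pair (j : Fin (n-2)) (s : {x : Fin (n-2) // x ≠ j} → Fin 2)
    (g : (Fin (n-2) → Fin 2) → ℚ) :
    ∑ i : Fin (n-2) → Fin 2,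
        (if (∀ x : {x : Fin (n-2) // x ≠ j}, i x.1 = s x) then (1:ℚ) else 0) * g i
      = g (Ecol j s 0) + g (Ecol j s 1) := by
  have h1 : ∀ i : Fin (n-2) → Fin 2,
      (if (∀ x : {x : Fin (n-2) // x ≠ j}, i x.1 = s x) then (1:ℚ) else 0) * g i
        = if (∀ x : {x : Fin (n-2) // x ≠ j}, i x.1 = s x) then g i else 0 := by
    intro i; split <;> simp
  simp only [h1]
  rw [← Finset.sum_filter]
  have h2 : Finset.univ.filter (fun i : Fin (n-2) → Fin 2 =>
      (∀ x : {x : Fin (n-2) // x ≠ j}, i x.1 = s x)) = {Ecol j s 0, Ecol j s 1} := by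
    ext i
    simp only [Finset.mem_filter, Finset.mem_univ, true_and, Finset.mem_insert,
      Finset.mem_singleton]
    exact pred_iff j s i
  rw [h2, Finset.sum_pair (Ecol_zero_ne_one j s)]
lemma sum_subtype_eq (g : (Fin (n-2) → Fin 2) → ℚ) :
    ∑ i : {i : Fin (n-2) → Fin 2 // i ≠ 0}, g i.1
      = (∑ i : Fin (n-2) → Fin 2, g i) - g 0 := by
  rw [← Finset.sum_subtype (Finset.univ.erase (0 : Fin (n-2) → Fin 2))
    (fun x => by simp) g]
  exact Finset.sum_erase_eq_sub (Finset.mem_univ 0)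

lemma rowvalInl (v : (Fin 2 ⊕ {i : (Fin (n-2)) → Fin 2 // i ≠ 0}) → ℚ)
    (j : Fin (n-2)) (s : {x : Fin (n-2) // x ≠ j} → Fin 2) :
    (gammaSigma n).mulVec v (Sum.inl ⟨j, s⟩)
      = extv v (Ecol j s 0) + extv v (Ecol j s 1) := by
  rw [← sum_indicator_pair j s (extv v)]
  have hsplit : ∑ i : Fin (n-2) → Fin 2,
      (if (∀ x : {x : Fin (n-2) // x ≠ j}, i x.1 = s x) then (1:ℚ) else 0) * extv v i
      = (if (∀ x : {x : Fin (n-2) // x ≠ j}, (0 : Fin (n-2) → Fin 2) x.1 = s x)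
            then (1:ℚ) else 0) * extv v 0
        + ∑ i : {i : Fin (n-2) → Fin 2 // i ≠ 0},
            (if (∀ x : {x : Fin (n-2) // x ≠ j}, i.1 x.1 = s x) then (1:ℚ) else 0)
              * extv v i.1 := by
    rw [sum_subtype_eq (n := n) (fun i =>
      (if (∀ x : {x : Fin (n-2) // x ≠ j}, i x.1 = s x) then (1:ℚ) else 0) * extv v i)]
    ring
  rw [hsplit]
  have hm : (gammaSigma n).mulVec v (Sum.inl ⟨j, s⟩)
      = ∑ c, gammaSigma n (Sum.inl ⟨j, s⟩) c * v c := rfl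
  rw [hm, Fintype.sum_sum_type, Fin.sum_univ_two]
  have e0 : extv v 0 = v (Sum.inl 0) + v (Sum.inl 1) := dif_pos rfl
  have esub : ∀ i : {i : Fin (n-2) → Fin 2 // i ≠ 0}, extv v i.1 = v (Sum.inr i) := by
    intro i
    rw [extv, dif_neg i.2]
  have hsum : ∑ i : {i : Fin (n-2) → Fin 2 // i ≠ 0},
      (if (∀ x : {x : Fin (n-2) // x ≠ j}, i.1 x.1 = s x) then (1:ℚ) else 0) * extv v i.1
      = ∑ i : {i : Fin (n-2) → Fin 2 // i ≠ 0},
        gammaSigma n (Sum.inl ⟨j, s⟩) (Sum.inr i) * v (Sum.inr i) := by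
    refine Finset.sum_congr rfl fun i _ => ?_
    rw [esub i]
    rfl
  rw [hsum, e0]
  show gammaSigma n (Sum.inl ⟨j, s⟩) (Sum.inl 0) * v (Sum.inl 0)
      + gammaSigma n (Sum.inl ⟨j, s⟩) (Sum.inl 1) * v (Sum.inl 1) + _ = _
  have hg : ∀ l : Fin 2, gammaSigma n (Sum.inl ⟨j, s⟩) (Sum.inl l)
      = (if (∀ x : {x : Fin (n-2) // x ≠ j}, (0 : Fin (n-2) → Fin 2) x.1 = s x)
            then (1:ℚ) else 0) := by
    intro l; rfl
  rw [hg 0, hg 1]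
  ring
lemma wt_zero : (∑ x, ((0 : Fin (n-2) → Fin 2) x : ℕ)) = 0 := by simp

lemma rowvalInr0 (v : (Fin 2 ⊕ {i : (Fin (n-2)) → Fin 2 // i ≠ 0}) → ℚ) :
    (gammaSigma n).mulVec v (Sum.inr 0)
      = v (Sum.inl 0)
        + ∑ i ∈ Finset.univ.filter
            (fun i : Fin (n-2) → Fin 2 => (∑ x, (i x : ℕ)) % 2 = 1), extv v i := by
  have hm : (gammaSigma n).mulVec v (Sum.inr 0)
      = ∑ c, gammaSigma n (Sum.inr 0) c * v c := rfl
  rw [hm, Fintype.sum_sum_type, Fin.sum_univ_two]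
  have hg0 : gammaSigma n (Sum.inr 0) (Sum.inl 0) = 1 := by simp [gammaSigma]
  have hg1 : gammaSigma n (Sum.inr 0) (Sum.inl 1) = 0 := by simp [gammaSigma]
  have hsub : ∑ i : {i : Fin (n-2) → Fin 2 // i ≠ 0},
      gammaSigma n (Sum.inr 0) (Sum.inr i) * v (Sum.inr i)
      = ∑ i : {i : Fin (n-2) → Fin 2 // i ≠ 0},
        (if (∑ x, (i.1 x : ℕ)) % 2 = 1 then extv v i.1 else 0) := by
    refine Finset.sum_congr rfl fun i _ => ?_
    have : extv v i.1 = v (Sum.inr i) := by rw [extv, dif_neg i.2]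
    rw [← this]
    show (if (∑ x, (i.1 x : ℕ)) % 2 = 1 then (if (0:Fin 2) = 0 then (1:ℚ) else 0)
        else (if (0:Fin 2) = 1 then 1 else 0)) * extv v i.1 = _
    split <;> simp
  rw [hsub, sum_subtype_eq (n := n)
    (fun i => if (∑ x, (i x : ℕ)) % 2 = 1 then extv v i else 0)]
  rw [← Finset.sum_filter, hg0, hg1, wt_zero]
  norm_num

lemma rowvalInr1 (v : (Fin 2 ⊕ {i : (Fin (n-2)) → Fin 2 // i ≠ 0}) → ℚ) :
    (gammaSigma n).mulVec v (Sum.inr 1)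
      = v (Sum.inl 1)
        + (∑ i ∈ Finset.univ.filter
            (fun i : Fin (n-2) → Fin 2 => (∑ x, (i x : ℕ)) % 2 = 0), extv v i)
        - extv v 0 := by
  have hm : (gammaSigma n).mulVec v (Sum.inr 1)
      = ∑ c, gammaSigma n (Sum.inr 1) c * v c := rfl
  rw [hm, Fintype.sum_sum_type, Fin.sum_univ_two]
  have hg0 : gammaSigma n (Sum.inr 1) (Sum.inl 0) = 0 := by simp [gammaSigma]
  have hg1 : gammaSigma n (Sum.inr 1) (Sum.inl 1) = 1 := by simp [gammaSigma]
  have hsub : ∑ i : {i : Fin (n-2) → Fin 2 // i ≠ 0},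
      gammaSigma n (Sum.inr 1) (Sum.inr i) * v (Sum.inr i)
      = ∑ i : {i : Fin (n-2) → Fin 2 // i ≠ 0},
        (if (∑ x, (i.1 x : ℕ)) % 2 = 0 then extv v i.1 else 0) := by
    refine Finset.sum_congr rfl fun i _ => ?_
    have : extv v i.1 = v (Sum.inr i) := by rw [extv, dif_neg i.2]
    rw [← this]
    show (if (∑ x, (i.1 x : ℕ)) % 2 = 1 then (if (1:Fin 2) = 0 then (1:ℚ) else 0)
        else (if (1:Fin 2) = 1 then 1 else 0)) * extv v i.1 = _
    have := Nat.mod_two_eq_zero_or_one (∑ x, (i.1 x : ℕ))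
    rcases this with h | h <;> simp [h]
  rw [hsub, sum_subtype_eq (n := n)
    (fun i => if (∑ x, (i x : ℕ)) % 2 = 0 then extv v i else 0)]
  rw [← Finset.sum_filter, hg0, hg1, wt_zero]
  norm_num
  ring
lemma wt_Ecol (j : Fin (n-2)) (s : {x : Fin (n-2) // x ≠ j} → Fin 2) :
    (∑ x, ((Ecol j s 1) x : ℕ)) = (∑ x, ((Ecol j s 0) x : ℕ)) + 1 := by
  rw [← Finset.add_sum_erase Finset.univ (fun x => ((Ecol j s 1) x : ℕ)) (Finset.mem_univ j),
      ← Finset.add_sum_erase Finset.univ (fun x => ((Ecol j s 0) x : ℕ)) (Finset.mem_univ j)]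
  have h0 : ((Ecol j s 0) j : ℕ) = 0 := by rw [Ecol_self]; rfl
  have h1 : ((Ecol j s 1) j : ℕ) = 1 := by rw [Ecol_self]; rfl
  have he : ∑ x ∈ Finset.univ.erase j, ((Ecol j s 1) x : ℕ)
      = ∑ x ∈ Finset.univ.erase j, ((Ecol j s 0) x : ℕ) := by
    refine Finset.sum_congr rfl fun x hx => ?_
    have hxj := (Finset.mem_erase.mp hx).1
    rw [Ecol_ne' j s 1 x hxj, Ecol_ne' j s 0 x hxj]
  rw [h0, h1, he]
  omega

lemma card_parity (hn : 4 ≤ n) :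
    (Finset.univ.filter
      (fun i : Fin (n-2) → Fin 2 => (∑ x, (i x : ℕ)) % 2 = 1)).card = 2^(n-3) ∧
    (Finset.univ.filter
      (fun i : Fin (n-2) → Fin 2 => (∑ x, (i x : ℕ)) % 2 = 0)).card = 2^(n-3) := by
  have hm : 0 < n - 2 := by omega
  set j0 : Fin (n-2) := ⟨0, hm⟩ with hj0
  set fl : (Fin (n-2) → Fin 2) → (Fin (n-2) → Fin 2) :=
    fun i x => if x = j0 then 1 - i x else i x with hfldef
  have hinv : ∀ a : Fin 2, 1 - (1 - a) = a := by decide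
  have hfl : ∀ i, fl (fl i) = i := by
    intro i; funext x
    by_cases hx : x = j0 <;> simp [hfldef, hx, hinv]
  have hone : ∀ a : Fin 2, ((1 - a : Fin 2) : ℕ) + (a : ℕ) = 1 := by decide
  have hpar : ∀ i : Fin (n-2) → Fin 2,
      (∑ x, (fl i x : ℕ)) % 2 = 1 ↔ ¬ ((∑ x, (i x : ℕ)) % 2 = 1) := by
    intro i
    rw [← Finset.add_sum_erase Finset.univ (fun x => (fl i x : ℕ)) (Finset.mem_univ j0),
        ← Finset.add_sum_erase Finset.univ (fun x => (i x : ℕ)) (Finset.mem_univ j0)]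
    have he : ∑ x ∈ Finset.univ.erase j0, (fl i x : ℕ)
        = ∑ x ∈ Finset.univ.erase j0, (i x : ℕ) := by
      refine Finset.sum_congr rfl fun x hx => ?_
      have hxj := (Finset.mem_erase.mp hx).1
      simp [hfldef, hxj]
    have hflj : (fl i j0 : ℕ) = ((1 - i j0 : Fin 2) : ℕ) := by simp [hfldef]
    rw [he, hflj]
    have := hone (i j0)
    omega
  have hp : 2^(n-2) = 2^(n-3) * 2 := by
    rw [← pow_succ]
    congr 1
    omega
  have hcard : (Finset.univ.filter
      (fun i : Fin (n-2) → Fin 2 => (∑ x, (i x : ℕ)) % 2 = 1)).card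
      = (Finset.univ.filter
      (fun i : Fin (n-2) → Fin 2 => (∑ x, (i x : ℕ)) % 2 = 0)).card := by
    have hAB : ∀ i ∈ Finset.univ.filter
        (fun i : Fin (n-2) → Fin 2 => (∑ x, (i x : ℕ)) % 2 = 1),
        fl i ∈ Finset.univ.filter
        (fun i : Fin (n-2) → Fin 2 => (∑ x, (i x : ℕ)) % 2 = 0) := by
      intro i hi
      rw [Finset.mem_filter] at hi ⊢
      refine ⟨Finset.mem_univ _, ?_⟩
      have h2 : ¬ ((∑ x, (fl i x : ℕ)) % 2 = 1) := (hpar i).not.mpr (by simp [hi.2])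
      exact (Nat.mod_two_eq_zero_or_one _).resolve_right h2
    have hBA : ∀ i ∈ Finset.univ.filter
        (fun i : Fin (n-2) → Fin 2 => (∑ x, (i x : ℕ)) % 2 = 0),
        fl i ∈ Finset.univ.filter
        (fun i : Fin (n-2) → Fin 2 => (∑ x, (i x : ℕ)) % 2 = 1) := by
      intro i hi
      rw [Finset.mem_filter] at hi ⊢
      refine ⟨Finset.mem_univ _, ?_⟩
      rw [hpar i]
      intro h
      rw [hi.2] at h
      exact absurd h (by decide)
    exact Finset.card_bij' (fun i _ => fl i) (fun i _ => fl i) hAB hBA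
      (fun i _ => hfl i) (fun i _ => hfl i)
  have hneg : Finset.univ.filter
      (fun i : Fin (n-2) → Fin 2 => ¬ ((∑ x, (i x : ℕ)) % 2 = 1))
      = Finset.univ.filter
      (fun i : Fin (n-2) → Fin 2 => (∑ x, (i x : ℕ)) % 2 = 0) := by
    ext i
    simp only [Finset.mem_filter, Finset.mem_univ, true_and]
    constructor
    · exact fun h => (Nat.mod_two_eq_zero_or_one _).resolve_right h
    · intro h hc
      rw [h] at hc
      exact absurd hc (by decide)
  have htot : (Finset.univ.filter
      (fun i : Fin (n-2) → Fin 2 => (∑ x, (i x : ℕ)) % 2 = 1)).card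
      + (Finset.univ.filter
      (fun i : Fin (n-2) → Fin 2 => (∑ x, (i x : ℕ)) % 2 = 0)).card = 2^(n-2) := by
    rw [← hneg]
    rw [Finset.card_filter_add_card_filter_not]
    rw [Finset.card_univ]
    simp [Fintype.card_fun]
  obtain ⟨A, hA⟩ : ∃ A, (Finset.univ.filter
      (fun i : Fin (n-2) → Fin 2 => (∑ x, (i x : ℕ)) % 2 = 1)).card = A := ⟨_, rfl⟩
  obtain ⟨B, hB⟩ : ∃ B, (Finset.univ.filter
      (fun i : Fin (n-2) → Fin 2 => (∑ x, (i x : ℕ)) % 2 = 0)).card = B := ⟨_, rfl⟩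
  rw [hA, hB] at hcard htot ⊢
  clear hA hB hneg
  omega
lemma sum_filter_odd (hn : 4 ≤ n) (g : (Fin (n-2) → Fin 2) → ℚ) (t : ℚ)
    (hg : ∀ i, g i = (-1 : ℚ)^(∑ x, (i x : ℕ)) * t) :
    ∑ i ∈ Finset.univ.filter
      (fun i : Fin (n-2) → Fin 2 => (∑ x, (i x : ℕ)) % 2 = 1), g i
      = -(2^(n-3) * t) := by
  have hconst : ∀ i ∈ Finset.univ.filter
      (fun i : Fin (n-2) → Fin 2 => (∑ x, (i x : ℕ)) % 2 = 1), g i = -t := by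
    intro i hi
    rw [hg i, Odd.neg_one_pow (Nat.odd_iff.mpr (Finset.mem_filter.mp hi).2)]
    ring
  rw [Finset.sum_congr rfl hconst, Finset.sum_const, (card_parity hn).1,
    nsmul_eq_mul]
  push_cast
  ring

lemma sum_filter_even (hn : 4 ≤ n) (g : (Fin (n-2) → Fin 2) → ℚ) (t : ℚ)
    (hg : ∀ i, g i = (-1 : ℚ)^(∑ x, (i x : ℕ)) * t) :
    ∑ i ∈ Finset.univ.filter
      (fun i : Fin (n-2) → Fin 2 => (∑ x, (i x : ℕ)) % 2 = 0), g i
      = 2^(n-3) * t := by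
  have hconst : ∀ i ∈ Finset.univ.filter
      (fun i : Fin (n-2) → Fin 2 => (∑ x, (i x : ℕ)) % 2 = 0), g i = t := by
    intro i hi
    rw [hg i, Even.neg_one_pow (Nat.even_iff.mpr (Finset.mem_filter.mp hi).2)]
    ring
  rw [Finset.sum_congr rfl hconst, Finset.sum_const, (card_parity hn).2,
    nsmul_eq_mul]
  push_cast
  ring

lemma extv_eq (v : (Fin 2 ⊕ {i : (Fin (n-2)) → Fin 2 // i ≠ 0}) → ℚ)
    (hv : (gammaSigma n).mulVec v = 0) :
    ∀ i : Fin (n-2) → Fin 2, extv v i = (-1 : ℚ)^(∑ x, (i x : ℕ)) * extv v 0 := by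
  have hrel : ∀ (j : Fin (n-2)) (s : {x : Fin (n-2) // x ≠ j} → Fin 2),
      extv v (Ecol j s 0) + extv v (Ecol j s 1) = 0 := by
    intro j s
    rw [← rowvalInl v j s, hv]
    rfl
  suffices h : ∀ (k : ℕ) (i : Fin (n-2) → Fin 2),
      (∑ x, (i x : ℕ)) = k → extv v i = (-1 : ℚ)^k * extv v 0 by
    intro i; exact h _ i rfl
  intro k
  induction k with
  | zero =>
    intro i hi
    have h0 : i = 0 := by
      funext x
      have hx : (i x : ℕ) = 0 :=
        Finset.sum_eq_zero_iff.mp hi x (Finset.mem_univ x)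
      exact Fin.ext hx
    rw [h0, pow_zero, one_mul]
  | succ k ih =>
    intro i hi
    have hj : ∃ j, i j ≠ 0 := by
      by_contra hcon
      push_neg at hcon
      have : (∑ x, (i x : ℕ)) = 0 :=
        Finset.sum_eq_zero fun x _ => by rw [hcon x]; rfl
      omega
    obtain ⟨j, hj⟩ := hj
    have hij : i j = 1 := by
      have h2 := (i j).isLt
      have h0 : (i j).val ≠ 0 := fun h => hj (Fin.ext h)
      have h1 : (i j).val = 1 := by omega
      exact Fin.ext h1
    have hE1 : Ecol j (fun x => i x.1) 1 = i := by
      funext x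
      by_cases hx : x = j
      · subst hx; rw [Ecol_self]; exact hij.symm
      · exact Ecol_ne' j _ 1 x hx
    have hwt : (∑ x, ((Ecol j (fun x => i x.1) 0) x : ℕ)) = k := by
      have hw := wt_Ecol j (fun x => i x.1)
      rw [hE1] at hw
      omega
    have hr := hrel j (fun x => i x.1)
    rw [hE1] at hr
    have hE0 := ih (Ecol j (fun x => i x.1) 0) hwt
    have : extv v i = -extv v (Ecol j (fun x => i x.1) 0) := by linarith
    rw [this, hE0, pow_succ]
    ring

lemma extv_fSigma (hn : 4 ≤ n) :
    ∀ i : Fin (n-2) → Fin 2, extv (fSigma n) i = (-1 : ℚ)^(∑ x, (i x : ℕ)) := by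
  intro i
  by_cases h : i = 0
  · subst h
    rw [extv, dif_pos rfl, wt_zero, pow_zero]
    show (if (0 : Fin 2) = 0 then (2:ℚ)^(n-3) else -(2^(n-3) - 1))
        + (if (1 : Fin 2) = 0 then (2:ℚ)^(n-3) else -(2^(n-3) - 1)) = 1
    rw [if_pos rfl, if_neg (by decide)]
    ring
  · rw [extv, dif_neg h]
    show (if (∑ x, (i x : ℕ)) % 2 = 1 then (-1:ℚ) else 1) = _
    rcases Nat.mod_two_eq_zero_or_one (∑ x, (i x : ℕ)) with he | ho
    · rw [if_neg (by rw [he]; decide), Even.neg_one_pow (Nat.even_iff.mpr he)]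
    · rw [if_pos ho, Odd.neg_one_pow (Nat.odd_iff.mpr ho)]

end GSAux

open GSAux

/-- The kernel of `Γ^n_σ` is one-dimensional, spanned by `fSigma n`. -/
theorem kernel_gammaSigma_span (n : ℕ) (hn : 4 ≤ n) :
    LinearMap.ker (gammaSigma n).mulVecLin = Submodule.span ℚ {fSigma n} := by
  have hfin2 : ∀ a : Fin 2, a = 0 ∨ a = 1 := by decide
  apply le_antisymm
  · intro v hv
    rw [LinearMap.mem_ker, Matrix.mulVecLin_apply] at hv
    rw [Submodule.mem_span_singleton]
    refine ⟨extv v 0, ?_⟩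
    have hext := extv_eq v hv
    have h0 : v (Sum.inl 0) + ∑ i ∈ Finset.univ.filter
        (fun i : Fin (n-2) → Fin 2 => (∑ x, (i x : ℕ)) % 2 = 1), extv v i = 0 := by
      rw [← rowvalInr0 v, hv]
      rfl
    have h1 : v (Sum.inl 1) + (∑ i ∈ Finset.univ.filter
        (fun i : Fin (n-2) → Fin 2 => (∑ x, (i x : ℕ)) % 2 = 0), extv v i)
        - extv v 0 = 0 := by
      rw [← rowvalInr1 v, hv]
      rfl
    rw [sum_filter_odd hn (extv v) (extv v 0) hext] at h0
    rw [sum_filter_even hn (extv v) (extv v 0) hext] at h1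
    funext c
    rcases c with l | i
    · rcases hfin2 l with rfl | rfl
      · have hf : fSigma n (Sum.inl 0) = 2^(n-3) := by simp [fSigma]
        rw [Pi.smul_apply, hf, smul_eq_mul]
        linarith
      · have hf : fSigma n (Sum.inl 1) = -(2^(n-3) - 1) := by
          simp only [fSigma]
          rw [if_neg (by decide)]
        rw [Pi.smul_apply, hf, smul_eq_mul]
        linarith
    · have hvi : v (Sum.inr i) = extv v i.1 := by rw [extv, dif_neg i.2]
      have hf : fSigma n (Sum.inr i)
          = if (∑ x, (i.1 x : ℕ)) % 2 = 1 then (-1:ℚ) else 1 := rfl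
      rw [Pi.smul_apply, hf, smul_eq_mul, hvi, hext i.1]
      rcases Nat.mod_two_eq_zero_or_one (∑ x, (i.1 x : ℕ)) with he | ho
      · rw [if_neg (by rw [he]; decide), Even.neg_one_pow (Nat.even_iff.mpr he)]
        ring
      · rw [if_pos ho, Odd.neg_one_pow (Nat.odd_iff.mpr ho)]
        ring
  · rw [Submodule.span_le, Set.singleton_subset_iff, SetLike.mem_coe,
      LinearMap.mem_ker, Matrix.mulVecLin_apply]
    have hg : ∀ i : Fin (n-2) → Fin 2,
        extv (fSigma n) i = (-1 : ℚ)^(∑ x, (i x : ℕ)) * 1 := by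
      intro i
      rw [extv_fSigma hn i, mul_one]
    funext r
    show (gammaSigma n).mulVec (fSigma n) r = 0
    rcases r with r | l
    · obtain ⟨j, s⟩ := r
      rw [rowvalInl, extv_fSigma hn, extv_fSigma hn, wt_Ecol, pow_succ]
      ring
    · rcases hfin2 l with rfl | rfl
      · rw [rowvalInr0, sum_filter_odd hn (extv (fSigma n)) 1 hg]
        have hf : fSigma n (Sum.inl 0) = 2^(n-3) := by simp [fSigma]
        rw [hf]
        ring
      · rw [rowvalInr1, sum_filter_even hn (extv (fSigma n)) 1 hg]
        have hf : fSigma n (Sum.inl 1) = -(2^(n-3) - 1) := by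
          simp only [fSigma]
          rw [if_neg (by decide)]
        have h0 : extv (fSigma n) 0 = 1 := by
          rw [extv_fSigma hn 0, wt_zero, pow_zero]
        rw [hf, h0]
        ring
end

section
/- Let $A$ be an integer matrix, $\mathbf{u}, \mathbf{v} \in \mathbb{N}^N$ with $A\mathbf{u} = A\mathbf{v}$, disjoint supports, $u_1 = \alpha \geq 2$ and $v_1 = 0$. Then for every integer $1 \leq \beta \leq \alpha - 1$, the vector $(\mathbf{u} - (\alpha-\beta)\mathbf{e}_1) - \frac{\beta}{\alpha}(\mathbf{u} - \mathbf{v})$ is a nonnegative real vector satisfying $A\mathbf{x} = A(\mathbf{u} - (\alpha-\beta)\mathbf{e}_1)$ and has first coordinate $0$. -/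
/-!
The correction term `(β/α)(u - v)` lies in the rational kernel of `A`, so subtracting it does not
change `A x`. Coordinatewise the vector is `(1 - β/α) uᵢ + (β/α) vᵢ` away from the first
coordinate, a convex combination of nonnegative numbers, and at the first coordinate it is
`α - (α - β) - (β/α) α = 0`.
-/

theorem sub_mul_sub_nonneg {K : Type*} [Field K] [LinearOrder K] [IsStrictOrderedRing K]
    {a b t : K} (ha : 0 ≤ a) (hb : 0 ≤ b) (ht₀ : 0 ≤ t) (ht₁ : t ≤ 1) :
    0 ≤ a - t * (a - b) := by
  have h : a - t * (a - b) = (1 - t) * a + t * b := by ring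
  rw [h]
  have : 0 ≤ 1 - t := sub_nonneg.mpr ht₁
  positivity

namespace Matrix

variable {m n R : Type*} [Fintype n]

theorem mulVec_sub_smul_of_mulVec_eq_zero [CommRing R] (M : Matrix m n R) {d : n → R}
    (hd : M *ᵥ d = 0) (x : n → R) (t : R) : M *ᵥ (x - t • d) = M *ᵥ x := by
  rw [mulVec_sub, mulVec_smul, hd, smul_zero, sub_zero]

theorem map_intCast_mulVec_natCast_sub_eq_zero [Ring R] (A : Matrix m n ℤ) {u v : n → ℕ}
    (h : A *ᵥ (fun i => (u i : ℤ)) = A *ᵥ (fun i => (v i : ℤ))) :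
    A.map (Int.cast : ℤ → R) *ᵥ (fun i => (u i : R) - (v i : R)) = 0 := by
  have hd : A *ᵥ ((fun i => (u i : ℤ)) - fun i => (v i : ℤ)) = 0 := by
    rw [mulVec_sub, h, sub_self]
  ext j
  have hj := (Int.castRingHom R).map_mulVec A ((fun i => (u i : ℤ)) - fun i => (v i : ℤ)) j
  rw [hd] at hj
  simpa [Function.comp_def] using hj.symm

end Matrix

theorem lp_solution_for_each_beta_general {m N : ℕ}
    (A : Matrix (Fin m) (Fin (N+1)) ℤ)
    (u v : Fin (N+1) → ℕ) (α β : ℕ)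
    (hβ2 : β ≤ α - 1)
    (hu : u 0 = α) (hv : v 0 = 0)
    (heq : A.mulVec (fun i => (u i : ℤ)) = A.mulVec (fun i => (v i : ℤ))) :
    (∀ i, (0:ℚ) ≤ ((u i : ℚ) - (if i = 0 then (α : ℚ) - (β : ℚ) else 0))
        - ((β : ℚ)/(α : ℚ)) * ((u i : ℚ) - (v i : ℚ))) ∧
    ((A.map (Int.cast : ℤ → ℚ)).mulVec
        (fun i => ((u i : ℚ) - (if i = 0 then (α : ℚ) - (β : ℚ) else 0))
          - ((β : ℚ)/(α : ℚ)) * ((u i : ℚ) - (v i : ℚ)))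
      = (A.map (Int.cast : ℤ → ℚ)).mulVec
        (fun i => (u i : ℚ) - (if i = 0 then (α : ℚ) - (β : ℚ) else 0))) ∧
    (((u 0 : ℚ) - ((α : ℚ) - (β : ℚ))) - ((β : ℚ)/(α : ℚ)) * ((u 0 : ℚ) - (v 0 : ℚ)) = 0) := by
  have hβα : (β : ℚ) ≤ α := by exact_mod_cast hβ2.trans (Nat.sub_le α 1)
  have hratio₀ : (0 : ℚ) ≤ β / α := by positivity
  have hratio₁ : (β : ℚ) / α ≤ 1 := div_le_one_of_le₀ hβα (Nat.cast_nonneg α)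
  have hfirst :
      ((u 0 : ℚ) - ((α : ℚ) - (β : ℚ))) - ((β : ℚ)/(α : ℚ)) * ((u 0 : ℚ) - (v 0 : ℚ)) = 0 := by
    have hβ0 : (α : ℚ) = 0 → (β : ℚ) = 0 := by
      intro h
      have : α = 0 := by exact_mod_cast h
      exact_mod_cast (by omega : β = 0)
    rw [hu, hv, Nat.cast_zero, sub_zero, div_mul_cancel_of_imp hβ0]
    ring
  refine ⟨fun i => ?_, ?_, hfirst⟩
  · by_cases hi : i = 0
    · subst hi
      rw [if_pos rfl, hfirst]
    · rw [if_neg hi, sub_zero]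
      exact sub_mul_sub_nonneg (Nat.cast_nonneg _) (Nat.cast_nonneg _) hratio₀ hratio₁
  · exact Matrix.mulVec_sub_smul_of_mulVec_eq_zero _
      (Matrix.map_intCast_mulVec_natCast_sub_eq_zero A heq) _ _

/-- For every `1 ≤ β ≤ α - 1`, the vector
`(u - (α-β)e₁) - (β/α)(u - v)` is a nonnegative real solution of
`Ax = A(u - (α-β)e₁)` with first coordinate `0`. -/
theorem lp_solution_for_each_beta {m N : ℕ}
    (A : Matrix (Fin m) (Fin (N+1)) ℤ)
    (u v : Fin (N+1) → ℕ) (α β : ℕ) (hα : 2 ≤ α)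
    (hβ1 : 1 ≤ β) (hβ2 : β ≤ α - 1)
    (hu : u 0 = α) (hv : v 0 = 0)
    (hdisj : ∀ i, u i = 0 ∨ v i = 0)
    (heq : A.mulVec (fun i => (u i : ℤ)) = A.mulVec (fun i => (v i : ℤ))) :
    (∀ i, (0:ℚ) ≤ ((u i : ℚ) - (if i = 0 then (α : ℚ) - (β : ℚ) else 0))
        - ((β : ℚ)/(α : ℚ)) * ((u i : ℚ) - (v i : ℚ))) ∧
    ((A.map (Int.cast : ℤ → ℚ)).mulVec
        (fun i => ((u i : ℚ) - (if i = 0 then (α : ℚ) - (β : ℚ) else 0))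
          - ((β : ℚ)/(α : ℚ)) * ((u i : ℚ) - (v i : ℚ)))
      = (A.map (Int.cast : ℤ → ℚ)).mulVec
        (fun i => (u i : ℚ) - (if i = 0 then (α : ℚ) - (β : ℚ) else 0))) ∧
    (((u 0 : ℚ) - ((α : ℚ) - (β : ℚ))) - ((β : ℚ)/(α : ℚ)) * ((u 0 : ℚ) - (v 0 : ℚ)) = 0) :=
  lp_solution_for_each_beta_general A u v α β hβ2 hu hv heq
end

section
/- For $n \geq 4$, the rank of the matrix $\Gamma^n_\sigma$ equals the rank of $A(B_n)$ plus one. -/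
open Submodule Set Function

namespace Matrix

variable {m n n' R K : Type*}

theorem rank_submatrix_id_of_surjective [Fintype n] [Fintype n'] [CommRing R]
    (A : Matrix m n R) {f : n' → n} (hf : Surjective f) : (A.submatrix id f).rank = A.rank := by
  rw [rank_eq_finrank_span_cols, rank_eq_finrank_span_cols]
  exact congrArg (fun s => Module.finrank R (span R s)) (hf.range_comp A.col)

theorem apply_eq_apply_of_mem_span_row [Fintype m] [CommSemiring R] {M : Matrix m n R}
    {c₁ c₂ : n} (hM : M.col c₁ = M.col c₂) {x : n → R} (hx : x ∈ span R (range M.row)) :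
    x c₁ = x c₂ := by
  obtain ⟨a, rfl⟩ := mem_span_range_iff_exists_fun R |>.mp hx
  simp only [Finset.sum_apply, Pi.smul_apply]
  exact Finset.sum_congr rfl fun i _ => congrArg (a i • ·) (congrFun hM i)

theorem rank_fromRows_fin_two [Finite m] [Fintype n] [Field K] (A : Matrix m n K)
    (B : Matrix (Fin 2) n K) (h₀ : B 0 ∉ span K (range A.row))
    (h₁ : B 0 + B 1 ∈ span K (range A.row)) :
    (fromRows A B).rank = A.rank + 1 := by
  have hspan : span K (range (fromRows A B).row) = span K (range A.row) ⊔ span K {B 0} := by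
    refine le_antisymm (span_le.mpr ?_) (sup_le (span_mono ?_) (span_mono ?_))
    · rintro _ ⟨i | i, rfl⟩
      · exact mem_sup_left (subset_span ⟨i, rfl⟩)
      · fin_cases i
        · exact mem_sup_right (mem_span_singleton_self _)
        · change B 1 ∈ _
          rw [show B 1 = (B 0 + B 1) - B 0 by abel]
          exact sub_mem (mem_sup_left h₁) (mem_sup_right (mem_span_singleton_self _))
    · rintro _ ⟨i, rfl⟩
      exact ⟨Sum.inl i, rfl⟩
    · rintro _ rfl
      exact ⟨Sum.inr 0, rfl⟩
  rw [rank_eq_finrank_span_row, rank_eq_finrank_span_row, hspan, finrank_sup_span_singleton h₀]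

end Matrix

open Matrix

theorem sum_marginMatrix_facet (n : ℕ) (R : Type*) [AddCommMonoidWithOne R] (j : Fin (n-2)) :
    ∑ a, marginMatrix n R ⟨j, a⟩ = 1 := by
  funext i
  simp [Finset.sum_apply, marginMatrix, ← funext_iff]

def gammaSigmaCell (n : ℕ) : Fin 2 ⊕ {i : Fin (n-2) → Fin 2 // i ≠ 0} → Fin (n-2) → Fin 2 :=
  Sum.elim (fun _ => 0) Subtype.val

theorem gammaSigmaCell_surjective (n : ℕ) : Surjective (gammaSigmaCell n) := fun i =>
  if h : i = 0 then ⟨Sum.inl 0, h.symm⟩ else ⟨Sum.inr ⟨i, h⟩, rfl⟩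

theorem toRows₁_gammaSigma (n : ℕ) :
    (gammaSigma n).toRows₁ = (marginMatrix n ℚ).submatrix id (gammaSigmaCell n) := by
  ext r (_ | _) <;> rfl

theorem toRows₂_gammaSigma_zero_add_one (n : ℕ) :
    (gammaSigma n).toRows₂ 0 + (gammaSigma n).toRows₂ 1 = 1 := by
  ext (l | i)
  · fin_cases l <;> simp [gammaSigma, toRows₂]
  · simp only [gammaSigma, toRows₂, of_apply, Pi.add_apply, Pi.one_apply]
    split_ifs <;> simp_all

/-- The rank of `Γⁿ_σ` equals the rank of `A(B_n)` plus one. -/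
theorem rank_gammaSigma (n : ℕ) (hn : 4 ≤ n) :
    (gammaSigma n).rank = (marginMatrix n ℚ).rank + 1 := by
  set A := (marginMatrix n ℚ).submatrix id (gammaSigmaCell n)
  have hA : (gammaSigma n).toRows₁ = A := toRows₁_gammaSigma n
  have hnew : (gammaSigma n).toRows₂ 0 ∉ span ℚ (range A.row) := fun h => by
    have := apply_eq_apply_of_mem_span_row (c₁ := Sum.inl 0) (c₂ := Sum.inl 1) rfl h
    simp [gammaSigma, toRows₂] at this
  have hsum : (gammaSigma n).toRows₂ 0 + (gammaSigma n).toRows₂ 1 ∈ span ℚ (range A.row) := by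
    let j : Fin (n-2) := ⟨0, by omega⟩
    have hones : ∑ a, A ⟨j, a⟩ = 1 := funext fun c => by
      simpa [A] using congrFun (sum_marginMatrix_facet n ℚ j) (gammaSigmaCell n c)
    rw [toRows₂_gammaSigma_zero_add_one, ← hones]
    exact sum_mem fun a _ => subset_span ⟨_, rfl⟩
  rw [← fromRows_toRows (gammaSigma n), hA, rank_fromRows_fin_two _ _ hnew hsum,
    rank_submatrix_id_of_surjective _ (gammaSigmaCell_surjective n)]
end
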